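/- arXiv:2005.11170 — 3 statements merged into one kernel-verified Lean document; each statement's English description precedes it below -/
import Mathlib

section
/- (Virtual training criterion.) Let α > 0 and β > 0, and define for an extractor E : 𝒳 → ℱ, predictor P, discriminator D and classifier C the value function V(E,P,D,C) = L_P(P,E) − α·L_D(D,E,P) − β·L_C(C,E,P), where L_D and L_C are the discriminator and classifier losses on the composite feature Φ_P(x) = (E(x), P(E(x))). Then the minimax optimization collapses to the virtual value function: inf over extractors E : 𝒳 → ℱ and predictors P of the sup over discriminators D and classifiers C of V(E,P,D,C) equals inf over extractors E : 𝒳 → ℱ of 𝒱(E) = H(Y|E(X)) − α·H(Z|(E(X),π_E(X))) − β·H(V|(E(X),π_E(X))), where infima and suprema are taken in the extended reals. -/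
open scoped BigOperators

/-- Marginal of a joint pmf on the first coordinate: `q_X(x) = ∑ w q(x,w)`. -/
noncomputable def margX {X W : Type*} [Fintype W] (q : X × W → ℝ) (x : X) : ℝ :=
  ∑ w, q (x, w)

open Classical in
/-- `Pr[f = a, W = w] = ∑_{x : f x = a} q(x,w)`. -/
noncomputable def jointPr {X W A : Type*} [Fintype X] (q : X × W → ℝ)
    (f : X → A) (a : A) (w : W) : ℝ :=
  ∑ x ∈ Finset.univ.filter (fun x => f x = a), q (x, w)

open Classical in
/-- `Pr[f = a] = ∑_{x : f x = a} q_X(x)`. -/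
noncomputable def featPr {X W A : Type*} [Fintype X] [Fintype W] (q : X × W → ℝ)
    (f : X → A) (a : A) : ℝ :=
  ∑ x ∈ Finset.univ.filter (fun x => f x = a), margX q x

open Classical in
/-- Conditional entropy `H(W | f(X))`, natural logarithm, with the convention that
summands with `Pr[f=a, W=w] = 0` contribute `0` (automatic since `-0 * log _ = 0`). -/
noncomputable def condEnt {X W A : Type*} [Fintype X] [Fintype W] (q : X × W → ℝ)
    (f : X → A) : ℝ :=
  ∑ a ∈ Finset.univ.image f, ∑ w,
    -(jointPr q f a w) * Real.log (jointPr q f a w / featPr q f a)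

/-- `-log t` valued in `(-∞, ∞]`, with the convention `-log 0 = +∞`. -/
noncomputable def negLog (t : ℝ) : EReal := if t = 0 then ⊤ else ((-(Real.log t) : ℝ) : EReal)

/-- Cross-entropy loss `∑_{x,w} q(x,w) · (-log P(Φ(x))(w))`, valued in `(-∞, ∞]`. -/
noncomputable def condLoss {X W G : Type*} [Fintype X] [Fintype W] (q : X × W → ℝ)
    (Φ : X → G) (P : G → W → ℝ) : EReal :=
  ∑ x, ∑ w, (q (x, w) : EReal) * negLog (P (Φ x) w)

/-- A conditional probability mass function on labels `W` with feature space `G`. -/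
def IsCondPMF {G W : Type*} [Fintype W] (P : G → W → ℝ) : Prop :=
  (∀ g w, 0 ≤ P g w) ∧ ∀ g, ∑ w, P g w = 1

open Classical in
/-- The posterior predictor: `Pr[Φ=g, W=w]/Pr[Φ=g]` on features of positive probability
in the image of `Φ`, and the uniform distribution on `W` otherwise. -/
noncomputable def posteriorPred {X W G : Type*} [Fintype X] [Fintype W] (q : X × W → ℝ)
    (Φ : X → G) (g : G) (w : W) : ℝ :=
  if g ∈ Set.range Φ ∧ 0 < featPr q Φ g then jointPr q Φ g w / featPr q Φ g
  else 1 / Fintype.card W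

/-- The posterior map `π(x)(w) = q(x,w)/q_X(x)`. -/
noncomputable def postMap {X W : Type*} [Fintype W] (q : X × W → ℝ) (x : X) : W → ℝ :=
  fun w => q (x, w) / margX q x

/-- Two-variable marginal `q_{XY}` of a pmf on `X × Y × Z × V`. -/
noncomputable def qXY {X Y Z V : Type*} [Fintype Z] [Fintype V]
    (q : X × Y × Z × V → ℝ) : X × Y → ℝ :=
  fun p => ∑ z, ∑ v, q (p.1, p.2, z, v)

/-- Two-variable marginal `q_{XZ}` of a pmf on `X × Y × Z × V`. -/
noncomputable def qXZ {X Y Z V : Type*} [Fintype Y] [Fintype V]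
    (q : X × Y × Z × V → ℝ) : X × Z → ℝ :=
  fun p => ∑ y, ∑ v, q (p.1, y, p.2, v)

/-- Two-variable marginal `q_{XV}` of a pmf on `X × Y × Z × V`. -/
noncomputable def qXV {X Y Z V : Type*} [Fintype Y] [Fintype Z]
    (q : X × Y × Z × V → ℝ) : X × V → ℝ :=
  fun p => ∑ y, ∑ z, q (p.1, y, z, p.2)

/-- The posterior feature of an extractor `E`:
`π_E(x)(y) = Pr[E = E(x), Y = y] / Pr[E = E(x)]`. -/
noncomputable def postFeat {X Y F : Type*} [Fintype X] [Fintype Y] (qxy : X × Y → ℝ)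
    (E : X → F) (x : X) : Y → ℝ :=
  fun y => jointPr qxy E (E x) y / featPr qxy E (E x)

/-- The virtual value function
`𝒱(E) = H(Y|E(X)) - α·H(Z|(E(X),π_E(X))) - β·H(V|(E(X),π_E(X)))`. -/
noncomputable def virtVal {X Y Z V F : Type*}
    [Fintype X] [Fintype Y] [Fintype Z] [Fintype V]
    (α β : ℝ) (q : X × Y × Z × V → ℝ) (E : X → F) : ℝ :=
  condEnt (qXY q) E
    - α * condEnt (qXZ q) (fun x => (E x, postFeat (qXY q) E x))
    - β * condEnt (qXV q) (fun x => (E x, postFeat (qXY q) E x))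

/-!
For a fixed feature map `Φ`, the cross-entropy `condLoss q Φ D` over conditional pmfs `D` is
minimized exactly by the posterior `D = posteriorPred q Φ`, with minimum `H(W | Φ(X))`: this is
Gibbs' inequality fibrewise, `-J log (J/P) ≤ J · (-log r) + (P r - J)` from `log t ≤ t - 1`,
where the correction terms `P r - J` sum to zero over each fibre. Hence each inner supremum and the
infimum over predictors are attained and replace the losses by conditional entropies. Finally
the features `(E(x), P(E(x)))` and `(E(x), π_E(x))` are injective relabellings of `E(x)`, which
leave conditional entropies unchanged.
-/

open Classical

theorem EReal.coe_finset_sum {ι : Type*} (s : Finset ι) (f : ι → ℝ) :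
    ((∑ i ∈ s, f i : ℝ) : EReal) = ∑ i ∈ s, (f i : EReal) :=
  map_sum (⟨⟨Real.toEReal, EReal.coe_zero⟩, EReal.coe_add⟩ : ℝ →+ EReal) f s

theorem EReal.finset_sum_mul_of_nonneg {ι : Type*} {s : Finset ι} {f : ι → EReal}
    (hf : ∀ i ∈ s, 0 ≤ f i) (c : EReal) : (∑ i ∈ s, f i) * c = ∑ i ∈ s, f i * c := by
  induction s using Finset.cons_induction with
  | empty => simp
  | cons a s ha ih =>
    simp only [Finset.forall_mem_cons] at hf
    rw [Finset.sum_cons, Finset.sum_cons, EReal.right_distrib_of_nonneg hf.1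
      (Finset.sum_nonneg hf.2), ih hf.2]

theorem neg_mul_log_div_sub_le_mul_negLog {J P r : ℝ} (hJ : 0 ≤ J) (hJP : J ≤ P)
    (hr : 0 ≤ r) :
    ((-J * Real.log (J / P) - (P * r - J) : ℝ) : EReal) ≤ (J : EReal) * negLog r := by
  rcases hJ.eq_or_lt with rfl | hJ
  · rw [EReal.coe_zero, zero_mul, EReal.coe_nonpos]
    simpa using mul_nonneg hJP hr
  have hP : 0 < P := hJ.trans_le hJP
  rcases hr.eq_or_lt with rfl | hr
  · simp [negLog, EReal.coe_mul_top_of_pos hJ]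
  have hlog : J * Real.log (P * r / J) ≤ P * r - J := by
    have := Real.log_le_sub_one_of_pos (show 0 < P * r / J by positivity)
    calc J * Real.log (P * r / J) ≤ J * (P * r / J - 1) := by gcongr
      _ = P * r - J := by field_simp
  have hsplit : Real.log (P * r / J) = Real.log (J / P)⁻¹ + Real.log r := by
    rw [inv_div, ← Real.log_mul (by positivity) hr.ne', div_mul_eq_mul_div]
  rw [negLog, if_neg hr.ne', ← EReal.coe_mul, EReal.coe_le_coe_iff]
  rw [hsplit, Real.log_inv] at hlog
  linarith

theorem jointPr_nonneg {X W G : Type*} [Fintype X] (q : X × W → ℝ) (hq0 : ∀ p, 0 ≤ q p)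
    (Φ : X → G) (g : G) (w : W) : 0 ≤ jointPr q Φ g w :=
  Finset.sum_nonneg fun _ _ => hq0 _

section CrossEntropy

variable {X W G : Type*} [Fintype X] [Fintype W] (q : X × W → ℝ)

theorem featPr_eq_sum_jointPr (Φ : X → G) (g : G) : featPr q Φ g = ∑ w, jointPr q Φ g w :=
  Finset.sum_comm

theorem jointPr_le_featPr (hq0 : ∀ p, 0 ≤ q p) (Φ : X → G) (g : G) (w : W) :
    jointPr q Φ g w ≤ featPr q Φ g := by
  rw [featPr_eq_sum_jointPr]
  exact Finset.single_le_sum (fun w _ => jointPr_nonneg q hq0 Φ g w) (Finset.mem_univ w)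

theorem condLoss_eq_sum_image (hq0 : ∀ p, 0 ≤ q p) (Φ : X → G) (D : G → W → ℝ) :
    condLoss q Φ D
      = ∑ g ∈ Finset.univ.image Φ, ∑ w, (jointPr q Φ g w : EReal) * negLog (D g w) := by
  rw [condLoss, ← Finset.sum_fiberwise_of_maps_to (g := Φ)
    (fun x _ => Finset.mem_image_of_mem Φ (Finset.mem_univ x))]
  refine Finset.sum_congr rfl fun g _ => ?_
  rw [Finset.sum_comm]
  refine Finset.sum_congr rfl fun w _ => ?_
  rw [jointPr, EReal.coe_finset_sum, EReal.finset_sum_mul_of_nonneg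
    (fun x _ => EReal.coe_nonneg.2 (hq0 _))]
  exact Finset.sum_congr rfl fun x hx => by rw [(Finset.mem_filter.1 hx).2]

theorem condEnt_le_condLoss (hq0 : ∀ p, 0 ≤ q p) (Φ : X → G) {D : G → W → ℝ}
    (hD : IsCondPMF D) : (condEnt q Φ : EReal) ≤ condLoss q Φ D := by
  have hcorr : ∀ g, ∑ w, (featPr q Φ g * D g w - jointPr q Φ g w) = 0 := fun g => by
    rw [Finset.sum_sub_distrib, ← Finset.mul_sum, hD.2, mul_one, featPr_eq_sum_jointPr, sub_self]
  have hent : condEnt q Φ = ∑ g ∈ Finset.univ.image Φ, ∑ w,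
      (-jointPr q Φ g w * Real.log (jointPr q Φ g w / featPr q Φ g)
        - (featPr q Φ g * D g w - jointPr q Φ g w)) := by
    simp only [Finset.sum_sub_distrib, hcorr, sub_zero, condEnt]
  rw [hent, condLoss_eq_sum_image q hq0, EReal.coe_finset_sum]
  refine Finset.sum_le_sum fun g _ => ?_
  rw [EReal.coe_finset_sum]
  exact Finset.sum_le_sum fun w _ => neg_mul_log_div_sub_le_mul_negLog
    (jointPr_nonneg q hq0 Φ g w) (jointPr_le_featPr q hq0 Φ g w) (hD.1 g w)

theorem posteriorPred_isCondPMF [Nonempty W] (hq0 : ∀ p, 0 ≤ q p) (Φ : X → G) :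
    IsCondPMF (posteriorPred q Φ) := by
  refine ⟨fun g w => ?_, fun g => ?_⟩ <;> unfold posteriorPred <;> split_ifs with h
  · exact div_nonneg (jointPr_nonneg q hq0 Φ g w) h.2.le
  · positivity
  · rw [← Finset.sum_div, ← featPr_eq_sum_jointPr, div_self h.2.ne']
  · simp

theorem condLoss_posteriorPred (hq0 : ∀ p, 0 ≤ q p) (Φ : X → G) :
    condLoss q Φ (posteriorPred q Φ) = condEnt q Φ := by
  rw [condLoss_eq_sum_image q hq0, condEnt, EReal.coe_finset_sum]
  refine Finset.sum_congr rfl fun g hg => ?_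
  rw [EReal.coe_finset_sum]
  refine Finset.sum_congr rfl fun w _ => ?_
  rcases (jointPr_nonneg q hq0 Φ g w).eq_or_lt with hJ | hJ
  · simp [← hJ]
  have hP : 0 < featPr q Φ g := hJ.trans_le (jointPr_le_featPr q hq0 Φ g w)
  have hmem : g ∈ Set.range Φ := by simpa using hg
  rw [posteriorPred, if_pos ⟨hmem, hP⟩, negLog, if_neg (by positivity), ← EReal.coe_mul]
  ring_nf

theorem iInf_condPMF_comp_condLoss [Nonempty W] (hq0 : ∀ p, 0 ≤ q p) (Φ : X → G)
    {h : EReal → EReal} (hh : Monotone h) :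
    ⨅ (D : G → W → ℝ), ⨅ (_ : IsCondPMF D), h (condLoss q Φ D) = h (condEnt q Φ) :=
  le_antisymm
    (iInf₂_le_of_le _ (posteriorPred_isCondPMF q hq0 Φ) (by rw [condLoss_posteriorPred q hq0]))
    (le_iInf₂ fun _ hD => hh (condEnt_le_condLoss q hq0 Φ hD))

theorem iSup_condPMF_comp_condLoss [Nonempty W] (hq0 : ∀ p, 0 ≤ q p) (Φ : X → G)
    {h : EReal → EReal} (hh : Antitone h) :
    ⨆ (D : G → W → ℝ), ⨆ (_ : IsCondPMF D), h (condLoss q Φ D) = h (condEnt q Φ) :=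
  le_antisymm
    (iSup₂_le fun _ hD => hh (condEnt_le_condLoss q hq0 Φ hD))
    (le_iSup₂_of_le _ (posteriorPred_isCondPMF q hq0 Φ) (by rw [condLoss_posteriorPred q hq0]))

theorem condEnt_comp_of_injective {A : Type*} (E : X → A) {g : A → G}
    (hg : Function.Injective g) : condEnt q (fun x => g (E x)) = condEnt q E := by
  have hfiber : ∀ a, Finset.univ.filter (fun x => g (E x) = g a)
      = Finset.univ.filter (fun x => E x = a) := fun a => by simp only [hg.eq_iff]
  have himage : Finset.univ.image (fun x => g (E x)) = (Finset.univ.image E).image g := by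
    rw [Finset.image_image]; rfl
  rw [condEnt, condEnt, himage, Finset.sum_image fun a _ b _ h => hg h]
  simp only [jointPr, featPr, hfiber]

theorem condEnt_prod_comp {A B : Type*} (E : X → A) (p : A → B) :
    condEnt q (fun x => (E x, p (E x))) = condEnt q E :=
  condEnt_comp_of_injective q E (g := fun a => (a, p a)) fun _ _ h => congrArg Prod.fst h

end CrossEntropy

theorem antitone_sub_mul (A : EReal) {c : ℝ} (hc : 0 ≤ c) :
    Antitone fun t : EReal => A - c * t :=
  fun _ _ h => EReal.sub_le_sub le_rfl (mul_le_mul_of_nonneg_left h (EReal.coe_nonneg.2 hc))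

theorem monotone_sub_right (b : EReal) : Monotone fun t : EReal => t - b :=
  fun _ _ h => EReal.sub_le_sub h le_rfl

theorem iSup_condPMF_sub_mul_condLoss_sub_mul_condLoss {X Z V G : Type*} [Fintype X]
    [Fintype Z] [Nonempty Z] [Fintype V] [Nonempty V] {qZ : X × Z → ℝ} {qV : X × V → ℝ}
    (hqZ : ∀ p, 0 ≤ qZ p) (hqV : ∀ p, 0 ≤ qV p) {α β : ℝ} (hα : 0 ≤ α) (hβ : 0 ≤ β)
    (A : EReal) (Φ : X → G) :
    ⨆ (D : G → Z → ℝ), ⨆ (_ : IsCondPMF D), ⨆ (C : G → V → ℝ), ⨆ (_ : IsCondPMF C),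
        A - α * condLoss qZ Φ D - β * condLoss qV Φ C
      = A - α * (condEnt qZ Φ : EReal) - β * (condEnt qV Φ : EReal) := by
  simp only [iSup_condPMF_comp_condLoss qV hqV Φ (antitone_sub_mul _ hβ)]
  exact iSup_condPMF_comp_condLoss qZ hqZ Φ
    (h := fun t => A - α * t - β * (condEnt qV Φ : EReal))
    ((monotone_sub_right _).comp_antitone (antitone_sub_mul A hα))

theorem qXY_nonneg {X Y Z V : Type*} [Fintype Z] [Fintype V] {q : X × Y × Z × V → ℝ}
    (hq0 : ∀ p, 0 ≤ q p) (p : X × Y) : 0 ≤ qXY q p :=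
  Finset.sum_nonneg fun _ _ => Finset.sum_nonneg fun _ _ => hq0 _

theorem qXZ_nonneg {X Y Z V : Type*} [Fintype Y] [Fintype V] {q : X × Y × Z × V → ℝ}
    (hq0 : ∀ p, 0 ≤ q p) (p : X × Z) : 0 ≤ qXZ q p :=
  Finset.sum_nonneg fun _ _ => Finset.sum_nonneg fun _ _ => hq0 _

theorem qXV_nonneg {X Y Z V : Type*} [Fintype Y] [Fintype Z] {q : X × Y × Z × V → ℝ}
    (hq0 : ∀ p, 0 ≤ q p) (p : X × V) : 0 ≤ qXV q p :=
  Finset.sum_nonneg fun _ _ => Finset.sum_nonneg fun _ _ => hq0 _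

theorem statement5_general {X Y Z V F : Type*}
    [Fintype X] [Fintype Y] [Nonempty Y]
    [Fintype Z] [Nonempty Z] [Fintype V] [Nonempty V]
    (α β : ℝ) (hα : 0 < α) (hβ : 0 < β)
    (q : X × Y × Z × V → ℝ) (hq0 : ∀ p, 0 ≤ q p) :
    (⨅ (E : X → F), ⨅ (P : F → Y → ℝ), ⨅ (_ : IsCondPMF P),
      ⨆ (D : F × (Y → ℝ) → Z → ℝ), ⨆ (_ : IsCondPMF D),
      ⨆ (C : F × (Y → ℝ) → V → ℝ), ⨆ (_ : IsCondPMF C),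
        condLoss (qXY q) E P
          - (α : EReal) * condLoss (qXZ q) (fun x => (E x, P (E x))) D
          - (β : EReal) * condLoss (qXV q) (fun x => (E x, P (E x))) C)
    = ⨅ (E : X → F), ((virtVal α β q E : ℝ) : EReal) := by
  refine iInf_congr fun E => ?_
  simp only [iSup_condPMF_sub_mul_condLoss_sub_mul_condLoss (qXZ_nonneg hq0) (qXV_nonneg hq0)
    hα.le hβ.le, condEnt_prod_comp]
  rw [iInf_condPMF_comp_condLoss (qXY q) (qXY_nonneg hq0) E
    (h := fun t => t - α * (condEnt (qXZ q) E : EReal) - β * (condEnt (qXV q) E : EReal))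
    ((monotone_sub_right _).comp (monotone_sub_right _))]
  unfold virtVal postFeat
  rw [condEnt_prod_comp (qXZ q) E fun f y => jointPr (qXY q) E f y / featPr (qXY q) E f,
    condEnt_prod_comp (qXV q) E fun f y => jointPr (qXY q) E f y / featPr (qXY q) E f]
  simp only [EReal.coe_sub, EReal.coe_mul]

/-- Virtual training criterion: the minimax optimization of the value
function `V(E,P,D,C) = L_P - α·L_D - β·L_C` collapses to minimizing the virtual value
function `𝒱(E) = H(Y|E(X)) - α·H(Z|(E(X),π_E(X))) - β·H(V|(E(X),π_E(X)))`. -/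
theorem statement5 {X Y Z V F : Type*}
    [Fintype X] [Nonempty X] [Fintype Y] [Nonempty Y]
    [Fintype Z] [Nonempty Z] [Fintype V] [Nonempty V]
    (α β : ℝ) (hα : 0 < α) (hβ : 0 < β)
    (q : X × Y × Z × V → ℝ) (hq0 : ∀ p, 0 ≤ q p) (hq1 : ∑ p, q p = 1)
    (hqX : ∀ x, 0 < margX (qXY q) x) :
    (⨅ (E : X → F), ⨅ (P : F → Y → ℝ), ⨅ (_ : IsCondPMF P),
      ⨆ (D : F × (Y → ℝ) → Z → ℝ), ⨆ (_ : IsCondPMF D),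
      ⨆ (C : F × (Y → ℝ) → V → ℝ), ⨆ (_ : IsCondPMF C),
        condLoss (qXY q) E P
          - (α : EReal) * condLoss (qXZ q) (fun x => (E x, P (E x))) D
          - (β : EReal) * condLoss (qXV q) (fun x => (E x, P (E x))) C)
    = ⨅ (E : X → F), ((virtVal α β q E : ℝ) : EReal) :=
  statement5_general α β hα hβ q hq0
end

section
/- (Achievability of the lower bound.) Let α ≥ 0, β ≥ 0, take the feature space ℱ = (𝒴 → ℝ), and let E* = π be the posterior extractor, π(x)(y) = Pr[Y=y|X=x] = q_{XY}(x,y)/q_X(x). Then E* satisfies the three optimality conditions H(Y|E*(X)) = H(Y|X), H(Z|(E*(X),π_{E*}(X))) = H(Z|π_{E*}(X)), and H(V|(E*(X),π_{E*}(X))) = H(V|π_{E*}(X)), and consequently its virtual value attains the lower bound: 𝒱(E*) = H(Y|X) − α·H(Z|π(X)) − β·H(V|π(X)). -/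
open scoped BigOperators

open Classical in
lemma condEnt_eq {X W A : Type*} [Fintype X] [Fintype W] (q : X × W → ℝ) (f : X → A) :
    condEnt q f
      = ∑ x, ∑ w, -(q (x, w)) * Real.log (jointPr q f (f x) w / featPr q f (f x)) := by
  unfold condEnt
  rw [← Finset.sum_fiberwise_of_maps_to (g := f)
      (fun x _ => Finset.mem_image_of_mem f (Finset.mem_univ x))]
  refine Finset.sum_congr rfl fun a ha => ?_
  have : ∀ w, -(jointPr q f a w) * Real.log (jointPr q f a w / featPr q f a)
      = ∑ x ∈ Finset.univ.filter (fun x => f x = a),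
          -(q (x, w)) * Real.log (jointPr q f a w / featPr q f a) := by
    intro w
    rw [jointPr, ← Finset.sum_neg_distrib, Finset.sum_mul]
  simp_rw [this]
  rw [Finset.sum_comm]
  refine Finset.sum_congr rfl fun x hx => ?_
  have hfx : f x = a := (Finset.mem_filter.mp hx).2
  rw [hfx]

open Classical in
lemma condEnt_congr {X W A B : Type*} [Fintype X] [Fintype W] (q : X × W → ℝ)
    (f : X → A) (g : X → B) (h : ∀ x x', f x' = f x ↔ g x' = g x) :
    condEnt q f = condEnt q g := by
  rw [condEnt_eq, condEnt_eq]
  refine Finset.sum_congr rfl fun x _ => Finset.sum_congr rfl fun w _ => ?_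
  have hfil : (Finset.univ.filter fun x' => f x' = f x)
      = Finset.univ.filter fun x' => g x' = g x := by
    ext x'; simp [h x x']
  unfold jointPr featPr
  rw [hfil]

lemma condEnt_pair_self {X W B : Type*} [Fintype X] [Fintype W] (qw : X × W → ℝ)
    (g : X → B) : condEnt qw (fun x => (g x, g x)) = condEnt qw g :=
  condEnt_congr qw _ _ (fun x x' => by
    constructor
    · intro h; exact (Prod.ext_iff.mp h).1
    · intro h; simp [h])

/-- Achievability of the lower bound: the posterior extractor
`E* = π` (with feature space `ℱ = (Y → ℝ)`) satisfies the three optimality conditions,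
and its virtual value attains the lower bound
`𝒱(E*) = H(Y|X) - α·H(Z|π(X)) - β·H(V|π(X))`. -/
theorem statement10 {X Y Z V : Type*}
    [Fintype X] [Nonempty X] [Fintype Y] [Nonempty Y]
    [Fintype Z] [Nonempty Z] [Fintype V] [Nonempty V]
    (α β : ℝ) (hα : 0 ≤ α) (hβ : 0 ≤ β)
    (q : X × Y × Z × V → ℝ) (hq0 : ∀ p, 0 ≤ q p) (hq1 : ∑ p, q p = 1)
    (hqX : ∀ x, 0 < margX (qXY q) x) :
    condEnt (qXY q) (postMap (qXY q)) = condEnt (qXY q) id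
    ∧ condEnt (qXZ q)
        (fun x => (postMap (qXY q) x, postFeat (qXY q) (postMap (qXY q)) x))
      = condEnt (qXZ q) (postFeat (qXY q) (postMap (qXY q)))
    ∧ condEnt (qXV q)
        (fun x => (postMap (qXY q) x, postFeat (qXY q) (postMap (qXY q)) x))
      = condEnt (qXV q) (postFeat (qXY q) (postMap (qXY q)))
    ∧ virtVal α β q (postMap (qXY q))
      = condEnt (qXY q) id
        - α * condEnt (qXZ q) (postMap (qXY q))
        - β * condEnt (qXV q) (postMap (qXY q)) := by
  classical
  set qxy := qXY q with hqxy
  set π := postMap qxy with hπ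
  -- positivity of featPr along π
  have hfeat : ∀ x : X, 0 < featPr qxy π (π x) := by
    intro x
    unfold featPr
    refine Finset.sum_pos (fun x' _ => hqX x') ⟨x, ?_⟩
    simp only [Finset.mem_filter]
    exact ⟨Finset.mem_univ x, trivial⟩
  -- joint factorization along π
  have hjoint : ∀ (x : X) (y : Y),
      jointPr qxy π (π x) y = π x y * featPr qxy π (π x) := by
    intro x y
    unfold jointPr featPr
    rw [Finset.mul_sum]
    refine Finset.sum_congr rfl fun x' hx' => ?_
    simp only [Finset.mem_filter] at hx'
    have hxx : π x' = π x := hx'.2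
    have : π x y = π x' y := by rw [hxx]
    rw [this, hπ]
    unfold postMap
    rw [div_mul_cancel₀ _ (ne_of_gt (hqX x'))]
  have hratio : ∀ (x : X) (y : Y),
      jointPr qxy π (π x) y / featPr qxy π (π x) = π x y := by
    intro x y
    rw [hjoint, mul_div_cancel_right₀ _ (ne_of_gt (hfeat x))]
  -- the posterior feature of π is π itself
  have hpost : postFeat qxy π = π := by
    funext x y
    exact hratio x y
  -- Claim 1
  have claim1 : condEnt qxy π = condEnt qxy id := by
    rw [condEnt_eq, condEnt_eq]
    refine Finset.sum_congr rfl fun x _ => Finset.sum_congr rfl fun y _ => ?_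
    rw [hratio]
    have hj : jointPr qxy id (id x) y = qxy (x, y) := by
      unfold jointPr
      rw [Finset.sum_filter]
      simp
    have hf : featPr qxy id (id x) = margX qxy x := by
      unfold featPr
      rw [Finset.sum_filter]
      simp
    rw [hj, hf]
    rfl
  have c2 : condEnt (qXZ q) (fun x => (π x, postFeat qxy π x))
      = condEnt (qXZ q) (postFeat qxy π) := by
    simp only [hpost]; exact condEnt_pair_self (qXZ q) π
  have c3 : condEnt (qXV q) (fun x => (π x, postFeat qxy π x))
      = condEnt (qXV q) (postFeat qxy π) := by
    simp only [hpost]; exact condEnt_pair_self (qXV q) π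
  refine ⟨claim1, c2, c3, ?_⟩
  unfold virtVal
  rw [claim1, c2, c3, hpost]
end

section
/- (Corollary 2, predictor part; equality in data processing implies sufficiency.) Let E : 𝒳 → ℱ be an extractor with H(Y|E(X)) = H(Y|X). Then the optimal predictor's output equals the true posterior: for every x ∈ 𝒳 and y ∈ 𝒴, Pr[E=E(x), Y=y] / Pr[E=E(x)] = q(x,y)/q_X(x). -/
open scoped BigOperators

/-! Grouping the points `x` by the value of `E`, `H(Y|E(X)) - H(Y|X)` is a sum, over the fibres
of `E` and the labels `y`, of the gaps in the log-sum inequality for the numbers `q(x,y)` against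
`q_X(x)`. Each gap is nonnegative (Jensen for the strictly convex `t ↦ t log t`), so equality of
the entropies makes every gap vanish, and by the equality case of Jensen the ratio
`q(x,y)/q_X(x)` is then constant on each fibre, hence equal to `Pr[E=a, Y=y]/Pr[E=a]`. -/

open Finset Real

section LogSum

variable {ι : Type*} (s : Finset ι) (a b : ι → ℝ)

noncomputable def logSumGap : ℝ :=
  ∑ i ∈ s, a i * log (a i / b i) - (∑ i ∈ s, a i) * log ((∑ i ∈ s, a i) / ∑ i ∈ s, b i)

variable {s a b}

lemma sum_div_sum_smul_div (hb : ∀ i ∈ s, 0 < b i) :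
    ∑ i ∈ s, (b i / ∑ j ∈ s, b j) • (a i / b i) = (∑ i ∈ s, a i) / ∑ i ∈ s, b i := by
  simp only [smul_eq_mul, sum_div]
  exact sum_congr rfl fun i hi => by field_simp [(hb i hi).ne']

lemma logSumGap_eq_mul_jensenGap (hb : ∀ i ∈ s, 0 < b i) :
    logSumGap s a b = (∑ i ∈ s, b i) *
      (∑ i ∈ s, (b i / ∑ j ∈ s, b j) • (fun t => t * log t) (a i / b i) -
        (fun t => t * log t) (∑ i ∈ s, (b i / ∑ j ∈ s, b j) • (a i / b i))) := by
  rcases s.eq_empty_or_nonempty with rfl | hs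
  · simp [logSumGap]
  have hB : 0 < ∑ i ∈ s, b i := sum_pos hb hs
  have hmean_mul_log : ∑ i ∈ s, (b i / ∑ j ∈ s, b j) • (a i / b i * log (a i / b i)) =
      (∑ i ∈ s, a i * log (a i / b i)) / ∑ i ∈ s, b i := by
    simp only [smul_eq_mul, sum_div]
    exact sum_congr rfl fun i hi => by field_simp [(hb i hi).ne']
  rw [sum_div_sum_smul_div hb, hmean_mul_log, logSumGap]
  field_simp

lemma logSumGap_nonneg (ha : ∀ i ∈ s, 0 ≤ a i) (hb : ∀ i ∈ s, 0 < b i) :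
    0 ≤ logSumGap s a b := by
  rcases s.eq_empty_or_nonempty with rfl | hs
  · simp [logSumGap]
  have hB : 0 < ∑ i ∈ s, b i := sum_pos hb hs
  rw [logSumGap_eq_mul_jensenGap hb]
  refine mul_nonneg hB.le (sub_nonneg.2 ?_)
  exact strictConvexOn_mul_log.convexOn.map_sum_le (fun i hi => (div_pos (hb i hi) hB).le)
    (by rw [← sum_div, div_self hB.ne']) fun i hi => div_nonneg (ha i hi) (hb i hi).le

lemma div_eq_sum_div_sum_of_logSumGap_eq_zero (ha : ∀ i ∈ s, 0 ≤ a i)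
    (hb : ∀ i ∈ s, 0 < b i) (hgap : logSumGap s a b = 0) :
    ∀ i ∈ s, a i / b i = (∑ j ∈ s, a j) / ∑ j ∈ s, b j := by
  rcases s.eq_empty_or_nonempty with rfl | hs
  · simp
  have hB : 0 < ∑ i ∈ s, b i := sum_pos hb hs
  rw [logSumGap_eq_mul_jensenGap hb, mul_eq_zero, sub_eq_zero] at hgap
  rw [← sum_div_sum_smul_div hb]
  refine (strictConvexOn_mul_log.map_sum_eq_iff (fun i hi => div_pos (hb i hi) hB)
    (by rw [← sum_div, div_self hB.ne']) fun i hi => div_nonneg (ha i hi) (hb i hi).le).1 ?_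
  exact (hgap.resolve_left hB.ne').symm

end LogSum

section ConditionalEntropy

variable {X Y : Type*} [Fintype X] [Fintype Y] (q : X × Y → ℝ)

lemma condEnt_id : condEnt q id = ∑ x, ∑ y, -q (x, y) * log (q (x, y) / margX q x) := by
  classical
  simp [condEnt, jointPr, featPr, sum_filter]

open Classical in
lemma condEnt_sub_condEnt_id {A : Type*} (f : X → A) :
    condEnt q f - condEnt q id = ∑ a ∈ univ.image f, ∑ y,
      logSumGap (univ.filter (f · = a)) (fun x => q (x, y)) (margX q) := by
  rw [condEnt_id, ← sum_fiberwise_of_maps_to (g := f) fun x _ => mem_image_of_mem f (mem_univ x),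
    condEnt, ← sum_sub_distrib]
  refine sum_congr rfl fun a _ => ?_
  rw [sum_comm, ← sum_sub_distrib]
  refine sum_congr rfl fun y _ => ?_
  simp only [logSumGap, jointPr, featPr, neg_mul, sum_neg_distrib]
  ring

end ConditionalEntropy

theorem statement11_general {X Y F : Type*} [Fintype X] [Fintype Y]
    (q : X × Y → ℝ) (hq0 : ∀ p, 0 ≤ q p)
    (hqX : ∀ x, 0 < margX q x) (E : X → F)
    (hE : condEnt q E = condEnt q id) :
    ∀ (x : X) (y : Y),
      jointPr q E (E x) y / featPr q E (E x) = q (x, y) / margX q x := by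
  classical
  intro x y
  have hgap_nonneg (a : F) (y : Y) :
      0 ≤ logSumGap (univ.filter (E · = a)) (fun x => q (x, y)) (margX q) :=
    logSumGap_nonneg (fun _ _ => hq0 _) fun _ _ => hqX _
  have hsum : ∑ a ∈ univ.image E, ∑ y,
      logSumGap (univ.filter (E · = a)) (fun x => q (x, y)) (margX q) = 0 := by
    rw [← condEnt_sub_condEnt_id, hE, sub_self]
  have hgap : logSumGap (univ.filter (E · = E x)) (fun x => q (x, y)) (margX q) = 0 :=
    (sum_eq_zero_iff_of_nonneg fun _ _ => hgap_nonneg _ _).1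
      ((sum_eq_zero_iff_of_nonneg fun a _ => sum_nonneg fun y _ => hgap_nonneg a y).1 hsum (E x)
        (mem_image_of_mem E (mem_univ x))) y (mem_univ y)
  exact (div_eq_sum_div_sum_of_logSumGap_eq_zero (fun _ _ => hq0 _) (fun _ _ => hqX _) hgap x
    (by simp)).symm

/-- Corollary 2, predictor part: if `H(Y|E(X)) = H(Y|X)` then the
optimal predictor's output equals the true posterior:
`Pr[E=E(x), Y=y]/Pr[E=E(x)] = q(x,y)/q_X(x)` for all `x, y`. -/
theorem statement11 {X Y F : Type*} [Fintype X] [Nonempty X] [Fintype Y] [Nonempty Y]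
    (q : X × Y → ℝ) (hq0 : ∀ p, 0 ≤ q p) (hq1 : ∑ p, q p = 1)
    (hqX : ∀ x, 0 < margX q x) (E : X → F)
    (hE : condEnt q E = condEnt q id) :
    ∀ (x : X) (y : Y),
      jointPr q E (E x) y / featPr q E (E x) = q (x, y) / margX q x :=
  statement11_general q hq0 hqX E hE
end
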